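/- Let G be a connected graph with n(G) ≥ 2 and let k ≥ 2. Then dim_ms(G ∘ \overline{K_k}) = n(G)(k−1) if and only if G is multiset distance irregular, where \overline{K_k} is the edgeless graph on k vertices. -/

import Mathlib

open SimpleGraph

/-- The multiset representation of `u` with respect to `S`: the multiset of
distances from `u` to the vertices of `S`, counted with multiplicity. -/
noncomputable def mrep {V : Type*} (G : SimpleGraph V) (u : V) (S : Finset V) : Multiset ℕ :=
  S.val.map fun w => G.dist u w

/-- `S` is an outer multiset resolving set of `G`: the multiset representations of
the vertices outside `S` are pairwise distinct. -/
def IsOMR {V : Type*} (G : SimpleGraph V) (S : Finset V) : Prop :=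
  ∀ u ∉ S, ∀ v ∉ S, mrep G u S = mrep G v S → u = v

/-- The outer multiset dimension of `G`. -/
noncomputable def dimMS {V : Type*} (G : SimpleGraph V) [Fintype V] : ℕ :=
  sInf {n | ∃ S : Finset V, S.card = n ∧ IsOMR G S}

/-- The diameter of `G`: the largest distance between vertices of `G`. -/
noncomputable def gdiam {V : Type*} (G : SimpleGraph V) [Fintype V] : ℕ :=
  Finset.univ.sup fun p : V × V => G.dist p.1 p.2

/-- The lexicographic product of two simple graphs: `(g, h)` and `(gʹ, hʹ)` are adjacent
iff `g gʹ` is an edge of `G`, or `g = gʹ` and `h hʹ` is an edge of `H`. -/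
def lexProd {α β : Type*} (G : SimpleGraph α) (H : SimpleGraph β) : SimpleGraph (α × β) where
  Adj p q := G.Adj p.1 q.1 ∨ (p.1 = q.1 ∧ H.Adj p.2 q.2)
  symm := by
    constructor
    intro p q h
    rcases h with h | ⟨h1, h2⟩
    · exact Or.inl h.symm
    · exact Or.inr ⟨h1.symm, h2.symm⟩
  loopless := by
    constructor
    intro p h
    rcases h with h | ⟨_, h2⟩
    · exact G.irrefl h
    · exact H.irrefl h2


/-- `G` is multiset distance irregular if distinct vertices have different multiset
representations with respect to the whole vertex set. -/
def MultisetDistIrregular {V : Type*} (G : SimpleGraph V) [Fintype V] : Prop :=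
  ∀ u v : V, u ≠ v → mrep G u Finset.univ ≠ mrep G v Finset.univ

/-!
In `G ∘ K̄_k` two vertices in different fibres are at the distance of their projections in `G`,
and two distinct vertices of one fibre are at distance 2. So the vertices of a fibre are twins:
the complement of an outer multiset resolving set meets each fibre at most once, which gives
`dim_ms ≥ n(G)(k - 1)`. In the case of equality the complement is a transversal `{(g, t g)}`,
and the representation of `(g, t g)` is `k - 1` copies of the distance multiset of `g` in `G`
with its `0` replaced by `2`; these are pairwise distinct exactly when `G` is multiset distance
irregular.
-/

open Finset

namespace SimpleGraph

variable {α β : Type*} {G : SimpleGraph α} {H : SimpleGraph β}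

lemma dist_fst_le_length_of_walk_lexProd (hG : G.Connected) {p q : α × β}
    (w : (lexProd G H).Walk p q) : G.dist p.1 q.1 ≤ w.length := by
  induction w with
  | nil => simp
  | @cons u v x hadj w ih =>
    have huv : G.dist u.1 v.1 ≤ 1 := by
      rcases hadj with hadj | ⟨heq, -⟩
      · exact (dist_eq_one_iff_adj.mpr hadj).le
      · simp [heq]
    have := hG.dist_triangle (u := u.1) (v := v.1) (w := x.1)
    rw [Walk.length_cons]
    omega

lemma lexProd_dist_of_fst_ne (hG : G.Connected) {g g' : α} (hg : g ≠ g') (h h' : β) :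
    (lexProd G H).dist (g, h) (g', h') = G.dist g g' := by
  obtain ⟨p, hp⟩ := (hG g g').exists_walk_length_eq_dist
  cases p with
  | nil => exact absurd rfl hg
  | @cons _ a _ hadj q =>
    -- leave the fibre of `h` on the first step, then follow `p` inside the fibre of `h'`
    let f : G →g lexProd G H := ⟨fun b => (b, h'), Or.inl⟩
    let w : (lexProd G H).Walk (g, h) (g', h') :=
      .cons (Or.inl hadj : (lexProd G H).Adj (g, h) (a, h')) (q.map f)
    refine le_antisymm ?_ ?_
    · calc (lexProd G H).dist (g, h) (g', h') ≤ w.length := dist_le w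
        _ = G.dist g g' := by rw [← hp]; exact congrArg (· + 1) (q.length_map f)
    · obtain ⟨w', hw'⟩ := Reachable.exists_walk_length_eq_dist ⟨w⟩
      exact hw' ▸ dist_fst_le_length_of_walk_lexProd hG w'

lemma lexProd_dist_of_snd_ne {g a : α} (hga : G.Adj g a) {h h' : β} (hne : h ≠ h')
    (hnadj : ¬H.Adj h h') : (lexProd G H).dist (g, h) (g, h') = 2 := by
  let w : (lexProd G H).Walk (g, h) (g, h') :=
    .cons (Or.inl hga : (lexProd G H).Adj (g, h) (a, h)) (.cons (Or.inl hga.symm) .nil)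
  have hle : (lexProd G H).dist (g, h) (g, h') ≤ 2 := dist_le w
  have hne0 : (lexProd G H).dist (g, h) (g, h') ≠ 0 := by
    rw [Ne, Reachable.dist_eq_zero_iff ⟨w⟩]
    simp [hne]
  have hne1 : (lexProd G H).dist (g, h) (g, h') ≠ 1 := by
    rw [Ne, dist_eq_one_iff_adj]
    simp [lexProd, hnadj]
  omega

lemma lexProd_bot_dist_of_ne [DecidableEq α] [Nontrivial α] (hG : G.Connected) {p q : α × β}
    (hpq : p ≠ q) :
    (lexProd G (⊥ : SimpleGraph β)).dist p q = if p.1 = q.1 then 2 else G.dist p.1 q.1 := by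
  obtain ⟨g, h⟩ := p
  obtain ⟨g', h'⟩ := q
  split_ifs with hg
  · obtain rfl : g = g' := hg
    obtain ⟨a, ha⟩ := hG.preconnected.exists_adj_of_nontrivial g
    exact lexProd_dist_of_snd_ne ha (by simpa using hpq) (by simp)
  · exact lexProd_dist_of_fst_ne hG hg h h'

end SimpleGraph

lemma mrep_eq_cons_erase {V : Type*} [DecidableEq V] (G : SimpleGraph V) {g : V} {s : Finset V}
    (hg : g ∈ s) : mrep G g s = 0 ::ₘ mrep G g (s.erase g) := by
  rw [mrep, mrep, erase_val]
  conv_lhs => rw [← Multiset.cons_erase (mem_def.1 hg)]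
  rw [Multiset.map_cons, dist_self]

lemma dimMS_le_card {V : Type*} [Fintype V] {G : SimpleGraph V} {S : Finset V}
    (hS : IsOMR G S) : dimMS G ≤ S.card :=
  Nat.sInf_le ⟨S, rfl, hS⟩

lemma exists_isOMR_card_eq_dimMS {V : Type*} [Fintype V] (G : SimpleGraph V) :
    ∃ S : Finset V, S.card = dimMS G ∧ IsOMR G S :=
  Nat.sInf_mem (s := {n | ∃ S : Finset V, S.card = n ∧ IsOMR G S})
    ⟨_, univ, rfl, fun u hu => absurd (mem_univ u) hu⟩

section LexProdBot

variable {V W : Type*} {G : SimpleGraph V}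

lemma mrep_lexProd_bot_eq_of_fst_eq [Nontrivial V] (hG : G.Connected) {S : Finset (V × W)}
    {p q : V × W} (hp : p ∉ S) (hq : q ∉ S) (hpq : p.1 = q.1) :
    mrep (lexProd G ⊥) p S = mrep (lexProd G ⊥) q S := by
  classical
  refine Multiset.map_congr rfl fun r hr => ?_
  have hr : r ∈ S := hr
  rw [lexProd_bot_dist_of_ne hG (ne_of_mem_of_not_mem hr hp).symm,
    lexProd_bot_dist_of_ne hG (ne_of_mem_of_not_mem hr hq).symm, hpq]

lemma IsOMR.injOn_fst_compl [Nontrivial V] (hG : G.Connected) {S : Finset (V × W)}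
    (hS : IsOMR (lexProd G ⊥) S) : Set.InjOn Prod.fst (↑S : Set (V × W))ᶜ :=
  fun _ hp _ hq hpq => hS _ hp _ hq (mrep_lexProd_bot_eq_of_fst_eq hG hp hq hpq)

variable [Fintype V] [Fintype W]

lemma IsOMR.card_mul_le [Nontrivial V] (hG : G.Connected) {S : Finset (V × W)}
    (hS : IsOMR (lexProd G ⊥) S) : Fintype.card V * (Fintype.card W - 1) ≤ S.card := by
  classical
  have hcompl : Sᶜ.card ≤ Fintype.card V :=
    card_le_card_of_injOn Prod.fst (fun _ _ => mem_univ _) (by simpa using hS.injOn_fst_compl hG)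
  have hS_le : S.card ≤ Fintype.card V * Fintype.card W := by
    simpa using S.card_le_univ
  rw [card_compl, Fintype.card_prod] at hcompl
  rw [Nat.mul_sub_one]
  omega

/-- The complement of `S` meets every fibre at most once and has `n(G)` elements, so it is the
graph of some `t : V → W`. -/
lemma IsOMR.exists_forall_mem_iff_ne [Nontrivial V] [Nonempty W] (hG : G.Connected)
    {S : Finset (V × W)} (hS : IsOMR (lexProd G ⊥) S)
    (hcard : S.card = Fintype.card V * (Fintype.card W - 1)) :
    ∃ t : V → W, ∀ p, p ∈ S ↔ p.2 ≠ t p.1 := by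
  classical
  have hinj : Set.InjOn Prod.fst (↑Sᶜ : Set (V × W)) := by simpa using hS.injOn_fst_compl hG
  have hcompl : Sᶜ.card = Fintype.card V := by
    rw [card_compl, Fintype.card_prod, hcard, Nat.mul_sub_one]
    have := Nat.le_mul_of_pos_right (Fintype.card V) (Fintype.card_pos (α := W))
    omega
  have himage : Sᶜ.image Prod.fst = univ :=
    eq_univ_of_card _ (by rw [card_image_of_injOn hinj, hcompl])
  have hfibre : ∀ g, ∃ w, (g, w) ∉ S := fun g => by
    obtain ⟨p, hp, hpg⟩ := mem_image.1 (himage ▸ mem_univ g)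
    exact ⟨p.2, by simpa [← hpg] using hp⟩
  choose t ht using hfibre
  refine ⟨t, fun p => ⟨fun hp hpt => ht p.1 (hpt ▸ hp), fun hpt => not_not.1 fun hp => hpt ?_⟩⟩
  exact congrArg Prod.snd (@hinj p (by simpa using hp) (p.1, t p.1) (by simpa using ht p.1) rfl)

variable [DecidableEq V] {t : V → W} {S : Finset (V × W)}

lemma map_fst_eq_nsmul_univ (hS : ∀ p, p ∈ S ↔ p.2 ≠ t p.1) :
    S.val.map Prod.fst = (Fintype.card W - 1) • univ.val := by
  classical
  ext g
  have hfibre : S.filter (fun p => g = p.1) = {g} ×ˢ univ.erase (t g) := by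
    ext ⟨g', w⟩
    simp only [mem_filter, hS, mem_product, mem_singleton, mem_erase, mem_univ, and_true]
    constructor
    · rintro ⟨h, rfl⟩
      exact ⟨rfl, h⟩
    · rintro ⟨rfl, h⟩
      exact ⟨h, rfl⟩
  rw [Multiset.count_map, ← filter_val, ← card_def, hfibre, Multiset.count_nsmul,
    Multiset.count_univ, card_product, card_singleton, card_erase_of_mem (mem_univ _), card_univ]
  ring

lemma card_eq_of_forall_mem_iff_ne (hS : ∀ p, p ∈ S ↔ p.2 ≠ t p.1) :
    S.card = Fintype.card V * (Fintype.card W - 1) := by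
  rw [card_def, ← Multiset.card_map Prod.fst, map_fst_eq_nsmul_univ hS, Multiset.card_nsmul,
    ← card_def, card_univ, mul_comm]

lemma mrep_lexProd_bot_eq_nsmul [Nontrivial V] (hG : G.Connected)
    (hS : ∀ p, p ∈ S ↔ p.2 ≠ t p.1) (g : V) :
    mrep (lexProd G ⊥) (g, t g) S = (Fintype.card W - 1) • (2 ::ₘ mrep G g (univ.erase g)) := by
  have hdist : mrep (lexProd G ⊥) (g, t g) S =
      (S.val.map Prod.fst).map fun g' => if g = g' then 2 else G.dist g g' := by
    rw [Multiset.map_map, mrep]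
    refine Multiset.map_congr rfl fun p hp => ?_
    have hne : (g, t g) ≠ p := fun h => (hS p).1 hp (h ▸ rfl)
    exact lexProd_bot_dist_of_ne hG hne
  rw [hdist, map_fst_eq_nsmul_univ hS, Multiset.map_nsmul]
  congr 1
  rw [← Multiset.cons_erase (mem_univ_val g), Multiset.map_cons, if_pos rfl, mrep, erase_val]
  congr 1
  refine Multiset.map_congr rfl fun g' hg' => if_neg ?_
  rw [← erase_val, mem_val, mem_erase] at hg'
  exact hg'.1.symm

lemma mrep_lexProd_bot_eq_iff [Nontrivial V] [Nontrivial W] (hG : G.Connected)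
    (hS : ∀ p, p ∈ S ↔ p.2 ≠ t p.1) (u v : V) :
    mrep (lexProd G ⊥) (u, t u) S = mrep (lexProd G ⊥) (v, t v) S ↔
      mrep G u univ = mrep G v univ := by
  have hW : Fintype.card W - 1 ≠ 0 := by have := Fintype.one_lt_card (α := W); omega
  rw [mrep_lexProd_bot_eq_nsmul hG hS, mrep_lexProd_bot_eq_nsmul hG hS,
    (nsmul_right_injective hW).eq_iff, Multiset.cons_inj_right,
    mrep_eq_cons_erase G (mem_univ u), mrep_eq_cons_erase G (mem_univ v), Multiset.cons_inj_right]

lemma isOMR_lexProd_bot_iff [Nontrivial V] [Nontrivial W] (hG : G.Connected)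
    (hS : ∀ p, p ∈ S ↔ p.2 ≠ t p.1) :
    IsOMR (lexProd G ⊥) S ↔ MultisetDistIrregular G := by
  have hout : ∀ g, (g, t g) ∉ S := fun g h => (hS _).1 h rfl
  constructor
  · intro hres u v huv hmrep
    exact huv (congrArg Prod.fst
      (hres _ (hout u) _ (hout v) ((mrep_lexProd_bot_eq_iff hG hS u v).2 hmrep)))
  · rintro hirr ⟨u, a⟩ hu ⟨v, b⟩ hv hmrep
    obtain rfl : a = t u := not_not.1 fun h => hu ((hS _).2 h)
    obtain rfl : b = t v := not_not.1 fun h => hv ((hS _).2 h)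
    obtain rfl : u = v := not_not.1 fun huv =>
      hirr u v huv ((mrep_lexProd_bot_eq_iff hG hS u v).1 hmrep)
    rfl

end LexProdBot

theorem stmt_14 (V : Type*) [Fintype V] (G : SimpleGraph V)
    (hconn : G.Connected) (hn : 2 ≤ Fintype.card V) (k : ℕ) (hk : 2 ≤ k) :
    dimMS (lexProd G (⊥ : SimpleGraph (Fin k))) = Fintype.card V * (k - 1) ↔
      MultisetDistIrregular G := by
  classical
  have : Nontrivial V := Fintype.one_lt_card_iff_nontrivial.1 hn
  have : Nontrivial (Fin k) := Fin.nontrivial_iff_two_le.2 hk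
  constructor
  · intro hdim
    obtain ⟨S, hcard, hres⟩ := exists_isOMR_card_eq_dimMS (lexProd G (⊥ : SimpleGraph (Fin k)))
    obtain ⟨t, hS⟩ := hres.exists_forall_mem_iff_ne hconn (by rw [hcard, hdim, Fintype.card_fin])
    exact (isOMR_lexProd_bot_iff hconn hS).1 hres
  · intro hirr
    let t : V → Fin k := fun _ => ⟨0, by omega⟩
    have hS : ∀ p, p ∈ univ.filter (fun p : V × Fin k => p.2 ≠ t p.1) ↔ p.2 ≠ t p.1 := by
      simp
    obtain ⟨S, hcard, hres⟩ := exists_isOMR_card_eq_dimMS (lexProd G (⊥ : SimpleGraph (Fin k)))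
    refine le_antisymm ?_ ?_
    · refine (dimMS_le_card ((isOMR_lexProd_bot_iff hconn hS).2 hirr)).trans_eq ?_
      rw [card_eq_of_forall_mem_iff_ne hS, Fintype.card_fin]
    · simpa [hcard] using hres.card_mul_le hconn
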